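/- The renormalised Baxterised elements h_i(u) := [u+1]/[u] - a_i satisfy the Yang-Baxter equation h_i(u)·h_{i+1}(u+v)·h_i(v) = h_{i+1}(v)·h_i(u+v)·h_{i+1}(u) whenever [u], [v], [u+v] are nonzero. -/

import Mathlib

/-!
Expanding both sides of the Yang–Baxter equation and reducing with `a_i² = [2] a_i` and the
braid relation (which trades `a_i a_{i+1} a_i` for `a_{i+1} a_i a_{i+1} - a_{i+1} + a_i`), the
difference of the two sides is a scalar multiple of `a_i - a_{i+1}`. With `α, β, γ` the
coefficients of `h(u), h(v), h(u+v)`, the scalar is `γ ([2] - α - β) + α β - 1`, and its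
vanishing is a rational identity in `q`, `q^u`, `q^v`.
-/

noncomputable section

/-- The q-number `[x] = (q^x - q^{-x})/(q - q⁻¹)` for a complex exponent `x`. -/
noncomputable def qnum (q x : ℂ) : ℂ := (q ^ x - q ^ (-x)) / (q - q⁻¹)

theorem yangBaxter_of_braid {R A : Type*} [CommRing R] [Ring A] [Algebra R A] {b c : A}
    {α β γ δ : R} (hb : b * b = δ • b) (hc : c * c = δ • c)
    (hbraid : b * c * b - b = c * b * c - c) (hscalar : γ * (δ - α - β) + α * β = 1) :
    (α • 1 - b) * (γ • 1 - c) * (β • 1 - b) = (β • 1 - c) * (γ • 1 - b) * (α • 1 - c) := by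
  have hbcb : b * c * b = c * b * c - c + b := by rw [← hbraid]; abel
  rw [← sub_eq_zero]
  calc _ = (γ * (δ - α - β) + α * β - 1) • (b - c) := by
        simp only [mul_sub, sub_mul, smul_mul_assoc, mul_smul_comm, one_mul, mul_one, hb, hc, hbcb]
        match_scalars <;> ring
    _ = 0 := by rw [hscalar, sub_self, zero_smul]

theorem baxter_coeff_identity {K : Type*} [Field K] {q x y : K} (hq : q ≠ 0)
    (hx : x - x⁻¹ ≠ 0) (hy : y - y⁻¹ ≠ 0) (hxy : x * y - (x * y)⁻¹ ≠ 0) :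
    (x * y * q - (x * y * q)⁻¹) / (x * y - (x * y)⁻¹) *
        (q + q⁻¹ - (x * q - (x * q)⁻¹) / (x - x⁻¹) - (y * q - (y * q)⁻¹) / (y - y⁻¹)) +
      (x * q - (x * q)⁻¹) / (x - x⁻¹) * ((y * q - (y * q)⁻¹) / (y - y⁻¹)) = 1 := by
  have hx0 : x ≠ 0 := by rintro rfl; simp at hx
  have hy0 : y ≠ 0 := by rintro rfl; simp at hy
  have hx2 : x ^ 2 - 1 ≠ 0 := by
    contrapose! hx
    field_simp
    linear_combination hx
  have hy2 : y ^ 2 - 1 ≠ 0 := by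
    contrapose! hy
    field_simp
    linear_combination hy
  have hxy2 : x ^ 2 * y ^ 2 - 1 ≠ 0 := by
    contrapose! hxy
    field_simp
    linear_combination hxy
  field_simp
  ring

theorem qnum_eq (q x : ℂ) : qnum q x = (q ^ x - (q ^ x)⁻¹) / (q - q⁻¹) := by
  rw [qnum, Complex.cpow_neg]

theorem qnum_two {q : ℂ} (hqq : q - q⁻¹ ≠ 0) : qnum q 2 = q + q⁻¹ := by
  rw [qnum_eq, div_eq_iff hqq]
  norm_cast
  ring

theorem cpow_sub_inv_ne_zero_of_qnum_ne_zero {q x : ℂ} (h : qnum q x ≠ 0) :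
    q ^ x - (q ^ x)⁻¹ ≠ 0 :=
  left_ne_zero_of_mul (qnum_eq q x ▸ h)

theorem qnum_add_one_div {q : ℂ} (hq : q ≠ 0) (hqq : q - q⁻¹ ≠ 0) (x : ℂ) :
    qnum q (x + 1) / qnum q x = (q ^ x * q - (q ^ x * q)⁻¹) / (q ^ x - (q ^ x)⁻¹) := by
  rw [qnum_eq, qnum_eq, Complex.cpow_add _ _ hq, Complex.cpow_one, div_div_div_cancel_right₀ hqq]

theorem qnum_coeff_identity {q : ℂ} (hq : q ≠ 0) (hqq : q - q⁻¹ ≠ 0) {u v : ℂ}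
    (hu : qnum q u ≠ 0) (hv : qnum q v ≠ 0) (huv : qnum q (u + v) ≠ 0) :
    qnum q (u + v + 1) / qnum q (u + v) *
        (qnum q 2 - qnum q (u + 1) / qnum q u - qnum q (v + 1) / qnum q v) +
      qnum q (u + 1) / qnum q u * (qnum q (v + 1) / qnum q v) = 1 := by
  have huv' := cpow_sub_inv_ne_zero_of_qnum_ne_zero huv
  rw [Complex.cpow_add _ _ hq] at huv'
  rw [qnum_two hqq, qnum_add_one_div hq hqq, qnum_add_one_div hq hqq, qnum_add_one_div hq hqq,
    Complex.cpow_add _ _ hq]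
  exact baxter_coeff_identity hq (cpow_sub_inv_ne_zero_of_qnum_ne_zero hu)
    (cpow_sub_inv_ne_zero_of_qnum_ne_zero hv) huv'

theorem h_yang_baxter_general (N : ℕ) (A : Type*) [Ring A] [Algebra ℂ A]
    (q : ℂ) (hq : q ≠ 0) (hqq : q - q⁻¹ ≠ 0) (a : ℕ → A)
    (hsq : ∀ i, 1 ≤ i → i ≤ N - 1 → a i * a i = qnum q 2 • a i)
    (hbraid : ∀ i, 1 ≤ i → i + 1 ≤ N - 1 →
      a i * a (i + 1) * a i - a i = a (i + 1) * a i * a (i + 1) - a (i + 1))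
    (i : ℕ) (h1 : 1 ≤ i) (h2 : i + 1 ≤ N - 1)
    (u v : ℂ) (hu : qnum q u ≠ 0) (hv : qnum q v ≠ 0) (huv : qnum q (u + v) ≠ 0) :
    letI h : ℕ → ℂ → A := fun j w => (qnum q (w + 1) / qnum q w) • (1 : A) - a j
    h i u * h (i + 1) (u + v) * h i v = h (i + 1) v * h i (u + v) * h (i + 1) u :=
  yangBaxter_of_braid (hsq i h1 (by omega)) (hsq (i + 1) (by omega) h2) (hbraid i h1 h2)
    (qnum_coeff_identity hq hqq hu hv huv)

/-- The Yang-Baxter equation for the renormalised Baxterised elements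
`h_i(u) = ([u+1]/[u])·1 - a_i` of the type-A Hecke algebra. -/
theorem h_yang_baxter (N : ℕ) (A : Type*) [Ring A] [Algebra ℂ A]
    (q : ℂ) (hq : q ≠ 0) (hqq : q - q⁻¹ ≠ 0) (a : ℕ → A)
    (hsq : ∀ i, 1 ≤ i → i ≤ N - 1 → a i * a i = qnum q 2 • a i)
    (hcomm : ∀ i j, 1 ≤ i → i ≤ N - 1 → 1 ≤ j → j ≤ N - 1 → (i + 1 < j ∨ j + 1 < i) →
      a i * a j = a j * a i)
    (hbraid : ∀ i, 1 ≤ i → i + 1 ≤ N - 1 →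
      a i * a (i + 1) * a i - a i = a (i + 1) * a i * a (i + 1) - a (i + 1))
    (i : ℕ) (h1 : 1 ≤ i) (h2 : i + 1 ≤ N - 1)
    (u v : ℂ) (hu : qnum q u ≠ 0) (hv : qnum q v ≠ 0) (huv : qnum q (u + v) ≠ 0) :
    letI h : ℕ → ℂ → A := fun j w => (qnum q (w + 1) / qnum q w) • (1 : A) - a j
    h i u * h (i + 1) (u + v) * h i v = h (i + 1) v * h i (u + v) * h (i + 1) u :=
  h_yang_baxter_general N A q hq hqq a hsq hbraid i h1 h2 u v hu hv huv

end
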